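/- arXiv:1607.05547 — 2 statements merged into one kernel-verified Lean document; each statement's English description precedes it below -/
import Mathlib

section
/- Fix 1 ≤ k < n and a real λ > 0, and let N_k = { l : k < l ≤ n, N(k,l) ≤ λ }. There exists l with k < l ≤ n and M(k,l) ≤ λ if and only if N_k is nonempty and O(k, l_k) ≤ λ, where l_k = min N_k. -/
noncomputable section

variable {X : Type*} [MetricSpace X]

/-- Path distance between vertices `i` and `j` of the path `p₁, …, pₙ`:
the sum of the edge weights `d(p_t, p_{t+1})` for `min i j ≤ t < max i j`. -/
def pathDist (p : ℕ → X) (i j : ℕ) : ℝ :=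
  ∑ t ∈ Finset.Ico (min i j) (max i j), dist (p t) (p (t + 1))

/-- Shortest-path distance between vertices `x` and `y` in the unicyclic graph
`P̄[k,l]` obtained by adding the shortcut `(p_k, p_l)` of weight `d(p_k, p_l)`. -/
def pbar (p : ℕ → X) (k l x y : ℕ) : ℝ :=
  min (pathDist p x y)
    (min (pathDist p x k + dist (p k) (p l) + pathDist p l y)
         (pathDist p x l + dist (p k) (p l) + pathDist p k y))

/-- The length `|C[k,l]|` of the cycle `C[k,l]`. -/
def cycleLen (p : ℕ → X) (k l : ℕ) : ℝ :=
  pathDist p k l + dist (p k) (p l)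

/-- The cycle distance `c_{k,l}(x,y)` for `k ≤ x, y ≤ l`. -/
def cycDist (p : ℕ → X) (k l x y : ℕ) : ℝ :=
  min (pathDist p x y) (cycleLen p k l - pathDist p x y)

/-- `S(k,l) = max_{k ≤ x ≤ l} p̄_{k,l}(1,x)`. -/
def Sfun (p : ℕ → X) (k l : ℕ) : ℝ :=
  sSup ((fun x => pbar p k l 1 x) '' Set.Icc k l)

/-- `E(k,l) = max_{k ≤ x ≤ l} p̄_{k,l}(x,n)`. -/
def Efun (p : ℕ → X) (n k l : ℕ) : ℝ :=
  sSup ((fun x => pbar p k l x n) '' Set.Icc k l)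

/-- `U(k,l) = p̄_{k,l}(1,n)`. -/
def Ufun (p : ℕ → X) (n k l : ℕ) : ℝ :=
  pbar p k l 1 n

/-- `O(k,l) = max_{k ≤ x < y ≤ l} c_{k,l}(x,y)`. -/
def Ofun (p : ℕ → X) (k l : ℕ) : ℝ :=
  sSup {r | ∃ x y : ℕ, k ≤ x ∧ x < y ∧ y ≤ l ∧ r = cycDist p k l x y}

/-- `N(k,l) = max (S(k,l), E(k,l), U(k,l))`. -/
def Nfun (p : ℕ → X) (n k l : ℕ) : ℝ :=
  max (Sfun p k l) (max (Efun p n k l) (Ufun p n k l))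

/-- `M(k,l) = max_{1 ≤ x < y ≤ n} p̄_{k,l}(x,y)`, the diameter of `P̄[k,l]`. -/
def Mfun (p : ℕ → X) (n k l : ℕ) : ℝ :=
  sSup {r | ∃ x y : ℕ, 1 ≤ x ∧ x < y ∧ y ≤ n ∧ r = pbar p k l x y}

/-!
For `1 ≤ k < l ≤ n`, `M(k,l) ≤ λ` iff `N(k,l) ≤ λ` and `O(k,l) ≤ λ`: a pair of vertices not both
on the cycle is dominated by a pair counted in `S`, `E` or `U`, since stretching such a pair along
the path, towards `p_1` or `p_n`, lengthens every route between its ends.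
Moreover `O(k,l') ≤ M(k,l)` for `k < l' ≤ l`, because by the triangle inequality moving the end of
the shortcut from `p_l` back to `p_{l'}` shortens no route between vertices of `C[k,l']`.
So if some `l` has `M(k,l) ≤ λ`, it lies in `N_k`, and `l_k ≤ l` has `M(k,l_k) ≤ λ` as well.
-/

section PathDist

variable (p : ℕ → X)

lemma pathDist_nonneg (i j : ℕ) : 0 ≤ pathDist p i j :=
  Finset.sum_nonneg fun _ _ => dist_nonneg

lemma pathDist_comm (i j : ℕ) : pathDist p i j = pathDist p j i := by
  rw [pathDist, pathDist, min_comm, max_comm]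

lemma pathDist_self (i : ℕ) : pathDist p i i = 0 := by
  simp [pathDist]

variable {p}

lemma pathDist_add_pathDist {i j k : ℕ} (hij : i ≤ j) (hjk : j ≤ k) :
    pathDist p i j + pathDist p j k = pathDist p i k := by
  rw [pathDist, pathDist, pathDist, min_eq_left hij, max_eq_right hij, min_eq_left hjk,
    max_eq_right hjk, min_eq_left (hij.trans hjk), max_eq_right (hij.trans hjk),
    Finset.sum_Ico_consecutive _ hij hjk]

lemma pathDist_mono {a' a b b' : ℕ} (ha : a' ≤ a) (hab : a ≤ b) (hb : b ≤ b') :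
    pathDist p a b ≤ pathDist p a' b' := by
  rw [← pathDist_add_pathDist ha (hab.trans hb), ← pathDist_add_pathDist hab hb]
  linarith [pathDist_nonneg p a' a, pathDist_nonneg p b b']

lemma dist_le_pathDist {i j : ℕ} (hij : i ≤ j) : dist (p i) (p j) ≤ pathDist p i j := by
  have h := dist_le_range_sum_dist (fun t => p (i + t)) (j - i)
  rw [pathDist, min_eq_left hij, max_eq_right hij, Finset.sum_Ico_eq_sum_range]
  simpa [Nat.add_sub_cancel' hij, Nat.add_assoc] using h

end PathDist

section Pbar

variable {p : ℕ → X} {k l x y : ℕ}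

lemma pbar_le_pathDist : pbar p k l x y ≤ pathDist p x y :=
  min_le_left _ _

lemma pbar_nonneg : 0 ≤ pbar p k l x y := by
  have := dist_nonneg (x := p k) (y := p l)
  refine le_min (pathDist_nonneg p x y) (le_min ?_ ?_) <;>
    linarith [pathDist_nonneg p x k, pathDist_nonneg p l y, pathDist_nonneg p x l,
      pathDist_nonneg p k y]

lemma pbar_self : pbar p k l x x = 0 :=
  le_antisymm (pathDist_self p x ▸ pbar_le_pathDist) pbar_nonneg

lemma pbar_eq_pathDist_of_le_shortcut (hxy : x ≤ y) (hyk : y ≤ k) (hkl : k ≤ l) :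
    pbar p k l x y = pathDist p x y := by
  refine le_antisymm pbar_le_pathDist (le_min le_rfl (le_min ?_ ?_))
  · linarith [pathDist_mono (p := p) le_rfl hxy hyk, pathDist_nonneg p l y,
      dist_nonneg (x := p k) (y := p l)]
  · linarith [pathDist_mono (p := p) le_rfl hxy (hyk.trans hkl), pathDist_nonneg p k y,
      dist_nonneg (x := p k) (y := p l)]

lemma pbar_eq_pathDist_of_shortcut_le (hlx : l ≤ x) (hxy : x ≤ y) (hkl : k ≤ l) :
    pbar p k l x y = pathDist p x y := by
  refine le_antisymm pbar_le_pathDist (le_min le_rfl (le_min ?_ ?_))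
  · linarith [pathDist_mono (p := p) hlx hxy le_rfl, pathDist_nonneg p x k,
      dist_nonneg (x := p k) (y := p l)]
  · linarith [pathDist_mono (p := p) (hkl.trans hlx) hxy le_rfl, pathDist_nonneg p x l,
      dist_nonneg (x := p k) (y := p l)]

lemma pbar_le_pbar_left {x' : ℕ} (hx : x' ≤ x) (hxk : x ≤ k) (hkl : k ≤ l) (hxy : x ≤ y) :
    pbar p k l x y ≤ pbar p k l x' y := by
  have hxk' := pathDist_mono (p := p) hx hxk le_rfl
  have hxl' := pathDist_mono (p := p) hx (hxk.trans hkl) le_rfl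
  exact min_le_min (pathDist_mono hx hxy le_rfl) (min_le_min (by linarith) (by linarith))

lemma pbar_le_pbar_right {y' : ℕ} (hy : y ≤ y') (hly : l ≤ y) (hkl : k ≤ l) (hxy : x ≤ y) :
    pbar p k l x y ≤ pbar p k l x y' := by
  have hly' : pathDist p l y ≤ pathDist p l y' := pathDist_mono le_rfl hly hy
  have hky' : pathDist p k y ≤ pathDist p k y' := pathDist_mono le_rfl (hkl.trans hly) hy
  exact min_le_min (pathDist_mono le_rfl hxy hy) (min_le_min (by linarith) (by linarith))

lemma pbar_eq_cycDist (hkx : k ≤ x) (hxy : x ≤ y) (hyl : y ≤ l) :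
    pbar p k l x y = cycDist p k l x y := by
  have hkxy := pathDist_add_pathDist (p := p) hkx hxy
  have hkyl := pathDist_add_pathDist (p := p) (hkx.trans hxy) hyl
  have hxyl := pathDist_add_pathDist (p := p) hxy hyl
  have around : pathDist p x k + dist (p k) (p l) + pathDist p l y
      = cycleLen p k l - pathDist p x y := by
    rw [cycleLen, pathDist_comm p x k, pathDist_comm p l y]; linarith
  have around_le : cycleLen p k l - pathDist p x y
      ≤ pathDist p x l + dist (p k) (p l) + pathDist p k y := by
    rw [cycleLen]; linarith [pathDist_nonneg p x y]
  rw [pbar, cycDist, around, min_eq_left around_le]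

lemma cycDist_le_pbar {l' : ℕ} (hkx : k ≤ x) (hxy : x ≤ y) (hyl : y ≤ l') (hl : l' ≤ l) :
    cycDist p k l' x y ≤ pbar p k l x y := by
  rw [← pbar_eq_cycDist hkx hxy hyl]
  have hd : dist (p k) (p l') ≤ dist (p k) (p l) + pathDist p l' l := by
    linarith [dist_le_pathDist (p := p) hl, dist_triangle (p k) (p l) (p l'),
      dist_comm (p l) (p l')]
  have hly : pathDist p l y = pathDist p y l' + pathDist p l' l := by
    rw [pathDist_comm p l y, pathDist_add_pathDist hyl hl]
  have hxl : pathDist p x l = pathDist p x l' + pathDist p l' l :=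
    (pathDist_add_pathDist (hxy.trans hyl) hl).symm
  unfold pbar
  rw [pathDist_comm p l' y]
  exact min_le_min le_rfl (min_le_min (by linarith) (by linarith))

end Pbar

section FiniteSup

lemma sSup_pairs_le_iff (f : ℕ → ℕ → ℝ) {a b : ℕ} (hab : a < b) {c : ℝ} :
    sSup {r | ∃ x y : ℕ, a ≤ x ∧ x < y ∧ y ≤ b ∧ r = f x y} ≤ c ↔
      ∀ x y, a ≤ x → x < y → y ≤ b → f x y ≤ c := by
  have hfin : {r | ∃ x y : ℕ, a ≤ x ∧ x < y ∧ y ≤ b ∧ r = f x y}.Finite := by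
    refine (((Set.finite_Icc a b).prod (Set.finite_Icc a b)).image (Function.uncurry f)).subset ?_
    rintro r ⟨x, y, hax, hxy, hyb, rfl⟩
    exact ⟨(x, y), ⟨⟨hax, by omega⟩, ⟨by omega, hyb⟩⟩, rfl⟩
  rw [csSup_le_iff hfin.bddAbove ⟨f a b, a, b, le_rfl, hab, le_rfl, rfl⟩]
  constructor
  · exact fun h x y hax hxy hyb => h _ ⟨x, y, hax, hxy, hyb, rfl⟩
  · rintro h r ⟨x, y, hax, hxy, hyb, rfl⟩
    exact h x y hax hxy hyb

lemma sSup_image_Icc_le_iff (f : ℕ → ℝ) {a b : ℕ} (hab : a ≤ b) {c : ℝ} :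
    sSup (f '' Set.Icc a b) ≤ c ↔ ∀ x ∈ Set.Icc a b, f x ≤ c := by
  rw [csSup_le_iff ((Set.finite_Icc a b).image f).bddAbove
    ((Set.nonempty_Icc.2 hab).image f), Set.forall_mem_image]

end FiniteSup

section Diameter

variable {p : ℕ → X} {n k l : ℕ} {lam : ℝ}

lemma pbar_le_of_Mfun_le (hM : Mfun p n k l ≤ lam) (hn : 2 ≤ n) {x y : ℕ} (hx : 1 ≤ x)
    (hxy : x ≤ y) (hy : y ≤ n) : pbar p k l x y ≤ lam := by
  have hpairs := (sSup_pairs_le_iff (pbar p k l) (by omega)).1 hM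
  rcases hxy.eq_or_lt with rfl | hxy
  · exact pbar_self.trans_le (pbar_nonneg.trans (hpairs 1 2 le_rfl one_lt_two hn))
  · exact hpairs x y hx hxy hy

lemma Nfun_le_of_Mfun_le (hk : 1 ≤ k) (hkl : k < l) (hln : l ≤ n) (hM : Mfun p n k l ≤ lam) :
    Nfun p n k l ≤ lam := by
  have hn : 2 ≤ n := by omega
  refine max_le ?_ (max_le ?_ ?_)
  · exact (sSup_image_Icc_le_iff _ hkl.le).2 fun x hx =>
      pbar_le_of_Mfun_le hM hn le_rfl (hk.trans hx.1) (hx.2.trans hln)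
  · exact (sSup_image_Icc_le_iff _ hkl.le).2 fun x hx =>
      pbar_le_of_Mfun_le hM hn (hk.trans hx.1) (hx.2.trans hln) le_rfl
  · exact pbar_le_of_Mfun_le hM hn le_rfl (by omega) le_rfl

lemma Ofun_le_of_Mfun_le {l' : ℕ} (hk : 1 ≤ k) (hkl' : k < l') (hl' : l' ≤ l) (hln : l ≤ n)
    (hM : Mfun p n k l ≤ lam) : Ofun p k l' ≤ lam :=
  (sSup_pairs_le_iff _ hkl').2 fun x y hkx hxy hyl =>
    (cycDist_le_pbar hkx hxy.le hyl hl').trans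
      (pbar_le_of_Mfun_le hM (by omega) (hk.trans hkx) hxy.le (by omega))

lemma Mfun_le_of_Nfun_le_of_Ofun_le (hk : 1 ≤ k) (hkl : k < l) (hln : l ≤ n)
    (hN : Nfun p n k l ≤ lam) (hO : Ofun p k l ≤ lam) : Mfun p n k l ≤ lam := by
  obtain ⟨hS, hE, hU⟩ : Sfun p k l ≤ lam ∧ Efun p n k l ≤ lam ∧ Ufun p n k l ≤ lam := by
    simpa only [Nfun, max_le_iff] using hN
  have hS := (sSup_image_Icc_le_iff _ hkl.le).1 hS
  have hE := (sSup_image_Icc_le_iff _ hkl.le).1 hE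
  have hO := (sSup_pairs_le_iff _ hkl).1 hO
  refine (sSup_pairs_le_iff _ (by omega)).2 fun x y hx hxy hyn => ?_
  by_cases hyk : y ≤ k
  · calc pbar p k l x y ≤ pathDist p 1 k := pbar_le_pathDist.trans (pathDist_mono hx hxy.le hyk)
      _ = pbar p k l 1 k := (pbar_eq_pathDist_of_le_shortcut hk le_rfl hkl.le).symm
      _ ≤ lam := hS k ⟨le_rfl, hkl.le⟩
  by_cases hlx : l ≤ x
  · calc pbar p k l x y ≤ pathDist p l n := pbar_le_pathDist.trans (pathDist_mono hlx hxy.le hyn)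
      _ = pbar p k l l n := (pbar_eq_pathDist_of_shortcut_le le_rfl hln hkl.le).symm
      _ ≤ lam := hE l ⟨hkl.le, le_rfl⟩
  rw [not_le] at hyk hlx
  rcases le_or_gt x k with hxk | hkx <;> rcases le_or_gt y l with hyl | hly
  · exact (pbar_le_pbar_left hx hxk hkl.le hxy.le).trans (hS y ⟨hyk.le, hyl⟩)
  · exact ((pbar_le_pbar_left hx hxk hkl.le hxy.le).trans
      (pbar_le_pbar_right hyn hly.le hkl.le (by omega))).trans hU
  · exact (pbar_eq_cycDist hkx.le hxy.le hyl).trans_le (hO x y hkx.le hxy hyl)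
  · exact (pbar_le_pbar_right hyn hly.le hkl.le hxy.le).trans (hE x ⟨hkx.le, hlx.le⟩)

end Diameter

theorem exists_good_shortcut_iff_general {X : Type*} [MetricSpace X]
    (n : ℕ) (p : ℕ → X)
    (k : ℕ) (hk : 1 ≤ k) (lam : ℝ) :
    (∃ l : ℕ, k < l ∧ l ≤ n ∧ Mfun p n k l ≤ lam) ↔
      ({l : ℕ | k < l ∧ l ≤ n ∧ Nfun p n k l ≤ lam}.Nonempty ∧
        Ofun p k (sInf {l : ℕ | k < l ∧ l ≤ n ∧ Nfun p n k l ≤ lam}) ≤ lam) := by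
  constructor
  · rintro ⟨l, hkl, hln, hM⟩
    have hl : l ∈ {l : ℕ | k < l ∧ l ≤ n ∧ Nfun p n k l ≤ lam} :=
      ⟨hkl, hln, Nfun_le_of_Mfun_le hk hkl hln hM⟩
    obtain ⟨hk_lt_min, -, -⟩ := Nat.sInf_mem ⟨l, hl⟩
    exact ⟨⟨l, hl⟩, Ofun_le_of_Mfun_le hk hk_lt_min (Nat.sInf_le hl) hln hM⟩
  · rintro ⟨hne, hO⟩
    obtain ⟨hkl, hln, hN⟩ := Nat.sInf_mem hne
    exact ⟨_, hkl, hln, Mfun_le_of_Nfun_le_of_Ofun_le hk hkl hln hN hO⟩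

/-- Fix `1 ≤ k < n` and `λ > 0`, and let
`N_k = { l : k < l ≤ n, N(k,l) ≤ λ }`. There exists `l` with `k < l ≤ n` and
`M(k,l) ≤ λ` if and only if `N_k` is nonempty and `O(k, l_k) ≤ λ`, where
`l_k = min N_k`. -/
theorem exists_good_shortcut_iff {X : Type*} [MetricSpace X]
    (n : ℕ) (hn : 2 ≤ n) (p : ℕ → X)
    (k : ℕ) (hk : 1 ≤ k) (hkn : k < n) (lam : ℝ) (hlam : 0 < lam) :
    (∃ l : ℕ, k < l ∧ l ≤ n ∧ Mfun p n k l ≤ lam) ↔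
      ({l : ℕ | k < l ∧ l ≤ n ∧ Nfun p n k l ≤ lam}.Nonempty ∧
        Ofun p k (sInf {l : ℕ | k < l ∧ l ≤ n ∧ Nfun p n k l ≤ lam}) ≤ lam) :=
  exists_good_shortcut_iff_general n p k hk lam
end
end

section
/- If P_T contains at most two vertices (i.e., the intersection of all longest paths of T is a single vertex or a single edge), then for every pair of vertices (u,v), the diameter of T ∪ {(u,v)} is at least diam(T); that is, the diameter of T cannot be decreased by adding a single shortcut edge. -/
noncomputable section

open SimpleGraph

/-- The weight of a walk in a graph whose vertices are embedded in a metric space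
via `f`: the sum of the metric distances along its edges. -/
def walkWeight {V : Type*} {X : Type*} [MetricSpace X] (G : SimpleGraph V) (f : V → X)
    {a b : V} (w : G.Walk a b) : ℝ :=
  (w.darts.map (fun e => dist (f e.fst) (f e.snd))).sum

/-- The shortest-path distance `δ_T(x,y)` in the tree `T = (G, f)`: since edge
weights are nonnegative and the path between `x` and `y` in a tree is unique,
this equals the sum of the edge weights along that unique path. -/
def treeDist {V : Type*} {X : Type*} [MetricSpace X] (G : SimpleGraph V) (f : V → X)
    (x y : V) : ℝ :=
  sInf {r | ∃ w : G.Walk x y, r = walkWeight G f w}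

/-- The diameter `diam(T) = max_{x,y} δ_T(x,y)`. -/
def treeDiam {V : Type*} {X : Type*} [MetricSpace X] (G : SimpleGraph V) (f : V → X) : ℝ :=
  sSup {r | ∃ x y : V, r = treeDist G f x y}

/-- The shortest-path distance between `x` and `y` in the augmented graph
`T ∪ {(u,v)}`, where the shortcut edge `(u,v)` has weight `d(f u, f v)`. -/
def augDist {V : Type*} {X : Type*} [MetricSpace X] (G : SimpleGraph V) (f : V → X)
    (u v x y : V) : ℝ :=
  min (treeDist G f x y)
    (min (treeDist G f x u + dist (f u) (f v) + treeDist G f v y)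
         (treeDist G f x v + dist (f u) (f v) + treeDist G f u y))

/-- The diameter of the augmented graph `T ∪ {(u,v)}`. -/
def augDiam {V : Type*} {X : Type*} [MetricSpace X] (G : SimpleGraph V) (f : V → X)
    (u v : V) : ℝ :=
  sSup {r | ∃ x y : V, r = augDist G f u v x y}

/-- A walk is a *longest path* of `T` if it is a path whose weight equals the
diameter of `T`. -/
def IsLongestPath {V : Type*} {X : Type*} [MetricSpace X] (G : SimpleGraph V) (f : V → X)
    {a b : V} (w : G.Walk a b) : Prop :=
  w.IsPath ∧ walkWeight G f w = treeDiam G f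

/-- `P_T`: the set of vertices of `T` that lie on every longest path of `T`. -/
def PT {V : Type*} {X : Type*} [MetricSpace X] (G : SimpleGraph V) (f : V → X) : Set V :=
  {z | ∀ (a b : V) (w : G.Walk a b), IsLongestPath G f w → z ∈ w.support}

/-!
Suppose the shortcut `(u, v)`, of weight `w = d(u, v)`, shortens every diametral pair of `T`,
where `D = diam(T)`. Orient each diametral pair `(x, y)` so that `δ(x, u) + w + δ(v, y) < D`.
No vertex is the first end of one oriented pair and the second end of another (adding the two
inequalities would give `2D < 2D`), so the ends split into sources and targets, and by the
four-point condition of tree metrics every source is at distance `D` from every target.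
The paths from the sources to a fixed target merge at a vertex `c₁` which lies on every longest
path and at which two sources branch off at the same depth `M₁ < D / 2`; symmetrically for the
targets and `c₂`. Then `D = M₁ + δ(c₁, c₂) + M₂`, and comparing with the shortened routes
between the four branching ends gives `δ(c₁, u) + w + δ(v, c₂) < δ(c₁, c₂)`.
The path from `c₁` to `c₂` lies in `P_T`, so it has at most one edge, and on a single edge
this inequality contradicts the triangle inequality in `X`.
-/

namespace SimpleGraph.Walk

variable {V : Type*} {G : SimpleGraph V}

theorem IsPath.append {u v w : V} {p : G.Walk u v} {q : G.Walk v w}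
    (hp : p.IsPath) (hq : q.IsPath) (h : ∀ c ∈ p.support, c ∈ q.support → c = v) :
    (p.append q).IsPath := by
  rw [Walk.isPath_def, Walk.support_append, List.nodup_append]
  refine ⟨hp.support_nodup, hq.support_nodup.sublist q.support.tail_sublist, ?_⟩
  rintro c hcp _ hcq rfl
  have hcv := h c hcp (List.mem_of_mem_tail hcq)
  subst hcv
  have := hq.support_nodup
  rw [← q.cons_tail_support] at this
  exact (List.nodup_cons.1 this).1 hcq

theorem IsPath.length_lt_ncard {x y : V} {p : G.Walk x y} (hp : p.IsPath) {s : Set V}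
    (hs : s.Finite) (h : ∀ z ∈ p.support, z ∈ s) : p.length < s.ncard := by
  classical
  calc p.length < p.support.length := by simp
    _ = (p.support.toFinset : Set V).ncard := by
      rw [Set.ncard_coe_finset, List.toFinset_card_of_nodup hp.support_nodup]
    _ ≤ s.ncard := Set.ncard_le_ncard (fun z hz => h z (by simpa using hz)) hs

end SimpleGraph.Walk

namespace SimpleGraph.IsTree

variable {V : Type*} {G : SimpleGraph V} (hG : G.IsTree)

def path (x y : V) : G.Walk x y :=
  (hG.existsUnique_path x y).exists.choose

theorem isPath_path (x y : V) : (hG.path x y).IsPath :=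
  (hG.existsUnique_path x y).exists.choose_spec

theorem eq_path {x y : V} {p : G.Walk x y} (hp : p.IsPath) : p = hG.path x y :=
  (hG.existsUnique_path x y).unique hp (hG.isPath_path x y)

theorem reverse_path (x y : V) : (hG.path x y).reverse = hG.path y x :=
  hG.eq_path (hG.isPath_path x y).reverse

theorem mem_support_path_comm {x y c : V} :
    c ∈ (hG.path x y).support ↔ c ∈ (hG.path y x).support := by
  rw [← hG.reverse_path x y, Walk.support_reverse, List.mem_reverse]

theorem path_eq_append {x y c : V} (hc : c ∈ (hG.path x y).support) :
    hG.path x y = (hG.path x c).append (hG.path c y) := by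
  classical
  rw [← (hG.path x y).take_spec hc, hG.eq_path ((hG.isPath_path x y).takeUntil hc),
    hG.eq_path ((hG.isPath_path x y).dropUntil hc)]

theorem length_path_add {x y c : V} (hc : c ∈ (hG.path x y).support) :
    (hG.path x c).length + (hG.path c y).length = (hG.path x y).length := by
  rw [hG.path_eq_append hc, Walk.length_append]

theorem mem_support_path_or {x y c d : V} (hc : c ∈ (hG.path x y).support)
    (hd : d ∈ (hG.path x y).support) :
    d ∈ (hG.path x c).support ∨ d ∈ (hG.path c y).support := by
  rwa [hG.path_eq_append hc, Walk.mem_support_append_iff] at hd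

theorem mem_support_path_of_left {x y c d : V} (hc : c ∈ (hG.path x y).support)
    (hd : d ∈ (hG.path x c).support) : d ∈ (hG.path x y).support := by
  rw [hG.path_eq_append hc, Walk.mem_support_append_iff]
  exact Or.inl hd

theorem mem_support_path_of_right {x y c d : V} (hc : c ∈ (hG.path x y).support)
    (hd : d ∈ (hG.path c y).support) : d ∈ (hG.path x y).support := by
  rw [hG.path_eq_append hc, Walk.mem_support_append_iff]
  exact Or.inr hd

theorem support_path_subset {x y c d : V} (hc : c ∈ (hG.path x y).support)
    (hd : d ∈ (hG.path x y).support) : (hG.path c d).support ⊆ (hG.path x y).support := by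
  intro z hz
  rcases hG.mem_support_path_or hc hd with hdc | hdc
  · exact hG.mem_support_path_of_left hc
      (hG.mem_support_path_of_right hdc ((hG.mem_support_path_comm).1 hz))
  · exact hG.mem_support_path_of_right hc (hG.mem_support_path_of_left hdc hz)

theorem mem_support_path_or_of_mem {x y c : V} (hc : c ∈ (hG.path x y).support) (z : V) :
    c ∈ (hG.path x z).support ∨ c ∈ (hG.path z y).support := by
  classical
  have hbypass := hG.eq_path ((hG.path x z).append (hG.path z y)).bypass_isPath
  rw [← Walk.mem_support_append_iff]
  exact Walk.support_bypass_subset_support _ (hbypass ▸ hc)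

theorem exists_median (x y z : V) : ∃ m, m ∈ (hG.path x y).support ∧
    m ∈ (hG.path x z).support ∧ m ∈ (hG.path y z).support := by
  obtain ⟨m, ⟨hmxy, hmyz⟩, hmin⟩ := Set.exists_min_image
    {c | c ∈ (hG.path x y).support ∧ c ∈ (hG.path y z).support}
    (fun c => (hG.path x c).length) ((List.finite_toSet _).subset fun _ hc => hc.1)
    ⟨y, Walk.end_mem_support _, Walk.start_mem_support _⟩
  refine ⟨m, hmxy, ?_, hmyz⟩
  -- `m` is the vertex of `path y z` on `path x y` fewest edges away from `x`, so `path x m` and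
  -- `path m z` meet only at `m`.
  have hpath : ((hG.path x m).append (hG.path m z)).IsPath := by
    refine (hG.isPath_path x m).append (hG.isPath_path m z) fun c hcx hcz => ?_
    have hle := hmin c ⟨hG.mem_support_path_of_left hmxy hcx,
      hG.mem_support_path_of_right hmyz hcz⟩
    have hlen := hG.length_path_add hcx
    exact Walk.eq_of_length_eq_zero (p := hG.path c m) (by omega)
  rw [← hG.eq_path hpath, Walk.mem_support_append_iff]
  exact Or.inr (Walk.start_mem_support _)

theorem exists_mem_support_path_forall {s : Set V} (hs : s.Finite) {a : V} (ha : a ∈ s) (b : V) :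
    ∃ l ∈ s, ∃ c ∈ (hG.path a l).support, ∀ x ∈ s, c ∈ (hG.path x b).support := by
  choose m hm using fun x => hG.exists_median a x b
  obtain ⟨l, hl, hmax⟩ :=
    Set.exists_max_image s (fun x => (hG.path a (m x)).length) hs ⟨a, ha⟩
  refine ⟨l, hl, m l, (hm l).1, fun x hx => ?_⟩
  rcases hG.mem_support_path_or (hm x).2.1 (hm l).2.1 with h | h
  · have hlen := hG.length_path_add h
    have hml : m l = m x := Walk.eq_of_length_eq_zero (p := hG.path (m l) (m x))
      (by have := hmax x hx; omega)
    exact hml ▸ (hm x).2.2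
  · exact hG.mem_support_path_of_right (hm x).2.2 h

end SimpleGraph.IsTree

section WalkWeight

variable {V X : Type*} [MetricSpace X] {G : SimpleGraph V} (f : V → X)

theorem walkWeight_cons {x y z : V} (h : G.Adj x y) (p : G.Walk y z) :
    walkWeight G f (.cons h p) = dist (f x) (f y) + walkWeight G f p := by
  simp [walkWeight]

theorem walkWeight_append {x y z : V} (p : G.Walk x y) (q : G.Walk y z) :
    walkWeight G f (p.append q) = walkWeight G f p + walkWeight G f q := by
  simp [walkWeight]

theorem walkWeight_reverse {x y : V} (p : G.Walk x y) :
    walkWeight G f p.reverse = walkWeight G f p := by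
  simp only [walkWeight, Walk.darts_reverse, List.map_reverse, List.sum_reverse, List.map_map]
  exact congrArg List.sum (List.map_congr_left fun _ _ => dist_comm _ _)

theorem walkWeight_nonneg {x y : V} (p : G.Walk x y) : 0 ≤ walkWeight G f p :=
  List.sum_nonneg (by simp)

theorem dist_le_walkWeight {x y : V} (p : G.Walk x y) : dist (f x) (f y) ≤ walkWeight G f p := by
  induction p with
  | nil => simp [walkWeight]
  | @cons a b c h p ih => rw [walkWeight_cons]; linarith [dist_triangle (f a) (f b) (f c)]

theorem walkWeight_bypass_le [DecidableEq V] {x y : V} (p : G.Walk x y) :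
    walkWeight G f p.bypass ≤ walkWeight G f p := by
  induction p with
  | nil => simp [Walk.bypass]
  | @cons a b _ h p ih =>
    rw [Walk.bypass, walkWeight_cons]
    split_ifs with hs
    · have := walkWeight_append f (p.bypass.takeUntil _ hs) (p.bypass.dropUntil _ hs)
      rw [p.bypass.take_spec hs] at this
      linarith [walkWeight_nonneg f (p.bypass.takeUntil _ hs), dist_nonneg (x := f a) (y := f b)]
    · rw [walkWeight_cons]; linarith

theorem walkWeight_of_length_le_one {x y : V} {p : G.Walk x y} (hp : p.length ≤ 1) :
    walkWeight G f p = dist (f x) (f y) := by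
  cases p with
  | nil => simp [walkWeight]
  | cons h p =>
    cases p with
    | nil => simp [walkWeight]
    | cons => simp at hp

theorem treeDist_le_walkWeight {x y : V} (p : G.Walk x y) : treeDist G f x y ≤ walkWeight G f p :=
  csInf_le ⟨0, by rintro _ ⟨q, rfl⟩; exact walkWeight_nonneg f q⟩ ⟨p, rfl⟩

theorem treeDist_nonneg (x y : V) : 0 ≤ treeDist G f x y :=
  Real.sInf_nonneg (by rintro _ ⟨q, rfl⟩; exact walkWeight_nonneg f q)

end WalkWeight

section TreeDist

variable {V X : Type*} [MetricSpace X] {G : SimpleGraph V}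

theorem treeDist_eq (hG : G.IsTree) (f : V → X) (x y : V) :
    treeDist G f x y = walkWeight G f (hG.path x y) := by
  classical
  refine le_antisymm (treeDist_le_walkWeight f _) (le_csInf ⟨_, hG.path x y, rfl⟩ ?_)
  rintro _ ⟨p, rfl⟩
  rw [← hG.eq_path p.bypass_isPath]
  exact walkWeight_bypass_le f p

theorem treeDist_comm (hG : G.IsTree) (f : V → X) (x y : V) :
    treeDist G f x y = treeDist G f y x := by
  rw [treeDist_eq hG, treeDist_eq hG, ← hG.reverse_path, walkWeight_reverse]

theorem treeDist_triangle (hG : G.IsTree) (f : V → X) (x y z : V) :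
    treeDist G f x z ≤ treeDist G f x y + treeDist G f y z := by
  rw [treeDist_eq hG f x y, treeDist_eq hG f y z, ← walkWeight_append]
  exact treeDist_le_walkWeight f _

theorem treeDist_add_treeDist (hG : G.IsTree) (f : V → X) {x y c : V}
    (hc : c ∈ (hG.path x y).support) :
    treeDist G f x c + treeDist G f c y = treeDist G f x y := by
  rw [treeDist_eq hG, treeDist_eq hG, treeDist_eq hG, hG.path_eq_append hc, walkWeight_append]

theorem dist_le_treeDist (hG : G.IsTree) (f : V → X) (x y : V) :
    dist (f x) (f y) ≤ treeDist G f x y :=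
  treeDist_eq hG f x y ▸ dist_le_walkWeight f _

theorem treeDist_eq_dist (hG : G.IsTree) (f : V → X) {x y : V} (h : (hG.path x y).length ≤ 1) :
    treeDist G f x y = dist (f x) (f y) := by
  rw [treeDist_eq hG, walkWeight_of_length_le_one f h]

theorem treeDist_eq_add_add (hG : G.IsTree) (f : V → X) {x y c₁ c₂ : V}
    (hc₁ : c₁ ∈ (hG.path x y).support) (hc₂ : c₂ ∈ (hG.path x y).support)
    (h : treeDist G f x c₁ + treeDist G f c₂ y < treeDist G f x y) :
    treeDist G f x c₁ + treeDist G f c₁ c₂ + treeDist G f c₂ y = treeDist G f x y := by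
  have hx₂ := treeDist_add_treeDist hG f hc₂
  rcases hG.mem_support_path_or hc₁ hc₂ with h₂ | h₂
  · have := treeDist_add_treeDist hG f h₂
    linarith [treeDist_nonneg (G := G) f c₂ c₁]
  · linarith [treeDist_add_treeDist hG f h₂, treeDist_add_treeDist hG f hc₁]

private theorem treeDist_add_treeDist_le_of_mem (hG : G.IsTree) (f : V → X)
    {x y z t m₁ m₂ : V}
    (hxy : m₁ ∈ (hG.path x y).support) (hyz : m₁ ∈ (hG.path y z).support)
    (hxt : m₂ ∈ (hG.path x t).support) (h : m₂ ∈ (hG.path m₁ y).support) :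
    treeDist G f x y + treeDist G f z t ≤ treeDist G f x t + treeDist G f y z := by
  have := treeDist_add_treeDist hG f hxy
  have := treeDist_add_treeDist hG f hyz
  have := treeDist_add_treeDist hG f hxt
  have := treeDist_add_treeDist hG f h
  have := treeDist_add_treeDist hG f (hG.mem_support_path_of_right hxy h)
  have := treeDist_triangle hG f z m₁ t
  have := treeDist_triangle hG f m₁ m₂ t
  linarith [treeDist_comm hG f z m₁, treeDist_comm hG f y m₁]

theorem treeDist_add_treeDist_le_max (hG : G.IsTree) (f : V → X) (x y z t : V) :
    treeDist G f x y + treeDist G f z t ≤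
      max (treeDist G f x z + treeDist G f y t) (treeDist G f x t + treeDist G f y z) := by
  obtain ⟨m₁, hxy, hxz, hyz⟩ := hG.exists_median x y z
  obtain ⟨m₂, hxy', hxt, hyt⟩ := hG.exists_median x y t
  rcases hG.mem_support_path_or hxy hxy' with h | h
  · have := treeDist_add_treeDist_le_of_mem hG f (hG.mem_support_path_comm.1 hxy) hxz hyt
      (hG.mem_support_path_comm.1 h)
    linarith [le_max_left (treeDist G f x z + treeDist G f y t)
      (treeDist G f x t + treeDist G f y z), treeDist_comm hG f x y]
  · exact le_max_of_le_right (treeDist_add_treeDist_le_of_mem hG f hxy hyz hxt h)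

theorem add_treeDist_le_max (hG : G.IsTree) (f : V → X) {p p' c : V}
    (hc : c ∈ (hG.path p p').support) (hM : treeDist G f p c = treeDist G f p' c) (s : V) :
    treeDist G f p c + treeDist G f s c ≤ max (treeDist G f s p) (treeDist G f s p') := by
  have h4 := treeDist_add_treeDist_le_max hG f s c p p'
  have := treeDist_add_treeDist hG f hc
  have := treeDist_comm hG f c p
  have := treeDist_comm hG f c p'
  rcases le_max_iff.1 h4 with h | h
  · exact le_max_of_le_left (by linarith)
  · exact le_max_of_le_right (by linarith)

end TreeDist

section Shortcut

variable {V X : Type*} [MetricSpace X] {G : SimpleGraph V} {f : V → X} {u v : V} {D : ℝ}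

def shortcutDist (G : SimpleGraph V) (f : V → X) (u v x y : V) : ℝ :=
  treeDist G f x u + dist (f u) (f v) + treeDist G f v y

theorem shortcutDist_swap (hG : G.IsTree) (f : V → X) (u v x y : V) :
    shortcutDist G f v u x y = shortcutDist G f u v y x := by
  simp only [shortcutDist, treeDist_comm hG f x v, treeDist_comm hG f u y, dist_comm (f v)]
  ring

theorem treeDist_add_treeDist_le_shortcutDist_add (hG : G.IsTree) (f : V → X) (u v x y z : V) :
    treeDist G f z x + treeDist G f x y ≤
      shortcutDist G f u v z x + shortcutDist G f u v x y := by
  simp only [shortcutDist]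
  linarith [treeDist_triangle hG f z u x, treeDist_triangle hG f x v y, treeDist_comm hG f u x,
    treeDist_comm hG f x v, dist_nonneg (x := f u) (y := f v)]

theorem treeDist_le_shortcutDist (hG : G.IsTree) (f : V → X) (u v : V) {x y : V}
    (h : (hG.path x y).length ≤ 1) : treeDist G f x y ≤ shortcutDist G f u v x y := by
  rw [treeDist_eq_dist hG f h, shortcutDist]
  linarith [dist_triangle4 (f x) (f u) (f v) (f y), dist_le_treeDist hG f x u,
    dist_le_treeDist hG f v y]

structure IsImprovingShortcut (G : SimpleGraph V) (f : V → X) (u v : V) (D : ℝ) : Prop where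
  treeDist_le : ∀ x y, treeDist G f x y ≤ D
  exists_treeDist_eq : ∃ x y, treeDist G f x y = D
  shortcutDist_lt : ∀ x y, treeDist G f x y = D →
    shortcutDist G f u v x y < D ∨ shortcutDist G f u v y x < D

def IsShortcutSource (G : SimpleGraph V) (f : V → X) (u v : V) (D : ℝ) (x : V) : Prop :=
  ∃ y, treeDist G f x y = D ∧ shortcutDist G f u v x y < D

namespace IsImprovingShortcut

theorem symm (h : IsImprovingShortcut G f u v D) (hG : G.IsTree) :
    IsImprovingShortcut G f v u D where
  treeDist_le := h.treeDist_le
  exists_treeDist_eq := h.exists_treeDist_eq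
  shortcutDist_lt x y hxy := by
    rw [shortcutDist_swap hG f u v x y, shortcutDist_swap hG f u v y x]
    exact (h.shortcutDist_lt x y hxy).symm

theorem treeDist_lt (h : IsImprovingShortcut G f u v D) (hG : G.IsTree) {x x' : V}
    (hx : IsShortcutSource G f u v D x) (hx' : IsShortcutSource G f u v D x') :
    treeDist G f x x' < D := by
  obtain ⟨y, hxy, hsxy⟩ := hx
  obtain ⟨y', hxy', hsxy'⟩ := hx'
  refine (h.treeDist_le x x').lt_of_ne fun hxx' => ?_
  rcases h.shortcutDist_lt x x' hxx' with hs | hs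
  · linarith [treeDist_add_treeDist_le_shortcutDist_add hG f u v x' y' x]
  · linarith [treeDist_add_treeDist_le_shortcutDist_add hG f u v x y x', treeDist_comm hG f x x']

theorem treeDist_eq_and_shortcutDist_lt (h : IsImprovingShortcut G f u v D) (hG : G.IsTree)
    {x y : V} (hx : IsShortcutSource G f u v D x) (hy : IsShortcutSource G f v u D y) :
    treeDist G f x y = D ∧ shortcutDist G f u v x y < D := by
  obtain ⟨x', hyx', hsyx'⟩ := hy
  rw [shortcutDist_swap hG] at hsyx'
  rw [treeDist_comm hG] at hyx'
  have hxx' := h.treeDist_lt hG hx ⟨y, hyx', hsyx'⟩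
  obtain ⟨y', hxy', -⟩ := hx
  have hxy : treeDist G f x y = D := by
    rcases le_max_iff.1 (treeDist_add_treeDist_le_max hG f x y' x' y) with h4 | h4
    · linarith [h.treeDist_le y' y]
    · linarith [h.treeDist_le y' x', h.treeDist_le x y]
  refine ⟨hxy, (h.shortcutDist_lt x y hxy).resolve_right fun hs => ?_⟩
  linarith [treeDist_add_treeDist_le_shortcutDist_add hG f u v y x x', treeDist_comm hG f x y]

theorem exists_branch_point [Finite V] (h : IsImprovingShortcut G f u v D) (hG : G.IsTree) :
    ∃ l l' c, IsShortcutSource G f u v D l ∧ IsShortcutSource G f u v D l' ∧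
      c ∈ (hG.path l l').support ∧ treeDist G f l c = treeDist G f l' c ∧
      ∀ x y, treeDist G f x y = D → c ∈ (hG.path x y).support := by
  obtain ⟨a, b, hab, hsab⟩ :
      ∃ a b, treeDist G f a b = D ∧ shortcutDist G f u v a b < D := by
    obtain ⟨x, y, hxy⟩ := h.exists_treeDist_eq
    rcases h.shortcutDist_lt x y hxy with hs | hs
    · exact ⟨x, y, hxy, hs⟩
    · exact ⟨y, x, (treeDist_comm hG f y x).trans hxy, hs⟩
  have ha : IsShortcutSource G f u v D a := ⟨b, hab, hsab⟩
  have hb : IsShortcutSource G f v u D b :=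
    ⟨a, (treeDist_comm hG f b a).trans hab, by rwa [shortcutDist_swap hG]⟩
  obtain ⟨l, hl, c, hc, hcb⟩ :=
    hG.exists_mem_support_path_forall (s := {x | IsShortcutSource G f u v D x})
      (Set.toFinite _) ha b
  have hc_dist : ∀ x, IsShortcutSource G f u v D x →
      treeDist G f x c = treeDist G f a c ∧ treeDist G f x c + treeDist G f c b = D :=
    fun x hx => by
      have := (h.treeDist_eq_and_shortcutDist_lt hG hx hb).1
      have := treeDist_add_treeDist hG f (hcb a ha)
      have := treeDist_add_treeDist hG f (hcb x hx)
      constructor <;> linarith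
  have hac : 2 * treeDist G f a c < D := by
    linarith [treeDist_add_treeDist hG f hc, h.treeDist_lt hG ha hl, (hc_dist l hl).1,
      treeDist_comm hG f c l]
  -- A diametral pair `(x, y)` avoiding `c` would have `δ(x, y) ≤ 2 δ(a, c) < D`.
  have hc_mem : ∀ x y, treeDist G f x y = D → IsShortcutSource G f u v D x →
      c ∈ (hG.path x y).support := by
    intro x y hxy hx
    refine (hG.mem_support_path_or_of_mem (hcb x hx) y).resolve_right fun hcy => ?_
    linarith [treeDist_add_treeDist hG f hcy, hc_dist x hx, treeDist_triangle hG f x c y,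
      treeDist_comm hG f c y, h.treeDist_le y b]
  refine ⟨a, l, c, ha, hl, hc, (hc_dist l hl).1.symm, fun x y hxy => ?_⟩
  rcases h.shortcutDist_lt x y hxy with hs | hs
  · exact hc_mem x y hxy ⟨y, hxy, hs⟩
  · have hyx := (treeDist_comm hG f y x).trans hxy
    exact hG.mem_support_path_comm.1 (hc_mem y x hyx ⟨x, hyx, hs⟩)

theorem exists_segment [Finite V] (h : IsImprovingShortcut G f u v D) (hG : G.IsTree) :
    ∃ c₁ c₂, (∀ x y, treeDist G f x y = D →
      (hG.path c₁ c₂).support ⊆ (hG.path x y).support) ∧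
      shortcutDist G f u v c₁ c₂ < treeDist G f c₁ c₂ := by
  obtain ⟨l, l', c₁, hl, hl', hc₁, hlc₁, hc₁D⟩ := h.exists_branch_point hG
  obtain ⟨r, r', c₂, hr, hr', hc₂, hrc₂, hc₂D⟩ := (h.symm hG).exists_branch_point hG
  refine ⟨c₁, c₂, fun x y hxy => hG.support_path_subset (hc₁D x y hxy) (hc₂D x y hxy),
    ?_⟩
  have hM₁ : 2 * treeDist G f l c₁ < D := by
    linarith [treeDist_add_treeDist hG f hc₁, h.treeDist_lt hG hl hl', treeDist_comm hG f c₁ l']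
  have hM₂ : 2 * treeDist G f r c₂ < D := by
    linarith [treeDist_add_treeDist hG f hc₂, (h.symm hG).treeDist_lt hG hr hr',
      treeDist_comm hG f c₂ r']
  have hlr := (h.treeDist_eq_and_shortcutDist_lt hG hl hr).1
  have hsplit := treeDist_eq_add_add hG f (hc₁D l r hlr) (hc₂D l r hlr)
    (by linarith [treeDist_comm hG f c₂ r])
  have hs₁ := (h.treeDist_eq_and_shortcutDist_lt hG hl hr).2
  have hs₂ := (h.treeDist_eq_and_shortcutDist_lt hG hl hr').2
  have hs₃ := (h.treeDist_eq_and_shortcutDist_lt hG hl' hr).2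
  have hs₄ := (h.treeDist_eq_and_shortcutDist_lt hG hl' hr').2
  simp only [shortcutDist] at hs₁ hs₂ hs₃ hs₄ ⊢
  have := treeDist_comm hG f c₁ u
  have := treeDist_comm hG f u l
  have := treeDist_comm hG f u l'
  have := treeDist_comm hG f c₂ r
  rcases le_max_iff.1 (add_treeDist_le_max hG f hc₁ hlc₁ u) with h₁ | h₁ <;>
    rcases le_max_iff.1 (add_treeDist_le_max hG f hc₂ hrc₂ v) with h₂ | h₂ <;>
    linarith

end IsImprovingShortcut

theorem finite_setOf_exists_eq [Finite V] (g : V → V → ℝ) : {r | ∃ x y, r = g x y}.Finite :=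
  (Set.finite_range fun p : V × V => g p.1 p.2).subset
    fun _ ⟨x, y, hr⟩ => ⟨(x, y), hr.symm⟩

theorem isImprovingShortcut_of_augDiam_lt [Finite V] (hG : G.IsTree)
    (h : augDiam G f u v < treeDiam G f) : IsImprovingShortcut G f u v (treeDiam G f) where
  treeDist_le x y := le_csSup (finite_setOf_exists_eq _).bddAbove ⟨x, y, rfl⟩
  exists_treeDist_eq := by
    obtain ⟨a⟩ := hG.1.nonempty
    obtain ⟨x, y, hxy⟩ := Set.Nonempty.csSup_mem (s := {r | ∃ x y, r = treeDist G f x y})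
      ⟨_, a, a, rfl⟩ (finite_setOf_exists_eq _)
    exact ⟨x, y, hxy.symm⟩
  shortcutDist_lt x y hxy := by
    have := (le_csSup (finite_setOf_exists_eq _).bddAbove ⟨x, y, rfl⟩).trans_lt h
    rw [augDist, hxy, min_lt_iff, min_lt_iff] at this
    refine this.resolve_left (lt_irrefl _) |>.imp id fun hs => ?_
    rw [shortcutDist, treeDist_comm hG f y u, treeDist_comm hG f v x]
    linarith

end Shortcut

/-- If `P_T` contains at most two vertices (i.e., the intersection
of all longest paths of `T` is a single vertex or a single edge), then for every
pair of vertices `(u,v)`, the diameter of `T ∪ {(u,v)}` is at least `diam(T)`; that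
is, the diameter of `T` cannot be decreased by adding a single shortcut edge. -/
theorem small_PT_no_improvement {V : Type*} [Fintype V] {X : Type*} [MetricSpace X]
    (G : SimpleGraph V) (hG : G.IsTree) (f : V → X)
    (hPT : (PT G f).ncard ≤ 2) :
    ∀ u v : V, treeDiam G f ≤ augDiam G f u v := by
  intro u v
  by_contra! hlt
  obtain ⟨c₁, c₂, hsub, hshort⟩ :=
    (isImprovingShortcut_of_augDiam_lt hG hlt).exists_segment hG
  have hc₁₂ : ∀ z ∈ (hG.path c₁ c₂).support, z ∈ PT G f := by
    rintro z hz a b w ⟨hw, hwD⟩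
    rw [hG.eq_path hw] at hwD ⊢
    exact hsub a b ((treeDist_eq hG f a b).trans hwD) hz
  have hlen := (hG.isPath_path c₁ c₂).length_lt_ncard (Set.toFinite _) hc₁₂
  linarith [treeDist_le_shortcutDist hG f u v (x := c₁) (y := c₂) (by omega)]
end
end
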